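/- Let m, n ∈ ℤ³ \ {0} and a, b ∈ ℝ³ with ⟨a, m⟩ = 0 and ⟨b, n⟩ = 0. Then the field x ↦ cos⟨m+n, x⟩ · P_{m+n}(⟨a,n⟩b + ⟨b,m⟩a) equals B(a·cos⟨m,·⟩ + b·sin⟨n,·⟩) + B(b·cos⟨n,·⟩ + a·sin⟨m,·⟩). -/

import Mathlib

open MeasureTheory Set

noncomputable section

/-- Vector fields on `ℝ³`, with `ℝ³ = Fin 3 → ℝ`. -/
abbrev V3 := Fin 3 → ℝ

/-- The Euclidean inner product on `ℝ³`. -/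
def dot3 (a b : V3) : ℝ := ∑ i, a i * b i

/-- Embedding of `ℤ³` into `ℝ³`. -/
def toR (m : Fin 3 → ℤ) : V3 := fun i => (m i : ℝ)

/-- `2π`-periodic vector field. -/
def PerField (v : V3 → V3) : Prop :=
  ∀ (x : V3) (k : Fin 3 → ℤ), v (x + (2 * Real.pi) • toR k) = v x

/-- `2π`-periodic scalar function. -/
def PerFun (p : V3 → ℝ) : Prop :=
  ∀ (x : V3) (k : Fin 3 → ℤ), p (x + (2 * Real.pi) • toR k) = p x

/-- The fundamental cell `[0,2π]³`. -/
def Box3 : Set V3 := Set.univ.pi fun _ => Icc (0 : ℝ) (2 * Real.pi)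

/-- Divergence-free vector field. -/
def DivFree3 (v : V3 → V3) : Prop :=
  ∀ x, (∑ i, fderiv ℝ v x (Pi.single i 1) i) = 0

/-- Zero mean over the fundamental cell. -/
def ZeroMean3 (v : V3 → V3) : Prop := (∫ x in Box3, v x) = 0

/-- Smooth periodic divergence-free zero-mean vector field. -/
def GoodField (v : V3 → V3) : Prop :=
  ContDiff ℝ (⊤ : ℕ∞) v ∧ PerField v ∧ DivFree3 v ∧ ZeroMean3 v

/-- The gradient of a scalar function. -/
def grad3 (p : V3 → ℝ) (x : V3) : V3 := fun i => fderiv ℝ p x (Pi.single i 1)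

/-- The convective term `⟨u,∇⟩u`, i.e. `x ↦ (Du)(x) (u x)`. -/
def convTerm (u : V3 → V3) (x : V3) : V3 := fderiv ℝ u x (u x)

/-- `w` is the Leray projection `B(u)` of the convective term `⟨u,∇⟩u`: it is a smooth
periodic divergence-free zero-mean field with `⟨u,∇⟩u − w = ∇p` for some smooth
periodic `p`. -/
def IsLeray (u w : V3 → V3) : Prop :=
  GoodField w ∧ ∃ p : V3 → ℝ, ContDiff ℝ (⊤ : ℕ∞) p ∧ PerFun p ∧
    ∀ x, convTerm u x - w x = grad3 p x

/-- The map `B` (defined by choice; for smooth periodic divergence-free zero-mean `u`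
the Leray projection exists and is unique, and `Bop u` is it). -/
def Bop (u : V3 → V3) : V3 → V3 :=
  haveI := Classical.propDecidable (∃ w, IsLeray u w)
  if h : ∃ w, IsLeray u w then h.choose else 0

/-- Orthogonal projection of `ℝ³` onto `ℓ^⊥` (and `0` for `ℓ = 0`). -/
def proj3 (ℓ : V3) (v : V3) : V3 :=
  if ℓ = 0 then 0 else v - (dot3 v ℓ / dot3 ℓ ℓ) • ℓ

/-- The space `E(K)` of trigonometric divergence-free fields with frequencies in `K`:
finite sums `x ↦ Σ_{ℓ} (a_ℓ cos⟨ℓ,x⟩ + b_ℓ sin⟨ℓ,x⟩)` with `ℓ ∈ K`, `a_ℓ, b_ℓ ⊥ ℓ`. -/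
def EK (K : Set (Fin 3 → ℤ)) : Set (V3 → V3) :=
  {v | ∃ (S : Finset (Fin 3 → ℤ)) (a b : (Fin 3 → ℤ) → V3),
    ↑S ⊆ K ∧
    (∀ ℓ ∈ S, dot3 (a ℓ) (toR ℓ) = 0 ∧ dot3 (b ℓ) (toR ℓ) = 0) ∧
    v = fun x => ∑ ℓ ∈ S,
      (Real.cos (dot3 (toR ℓ) x) • a ℓ + Real.sin (dot3 (toR ℓ) x) • b ℓ)}

/-- The set of fields of the form `η − Σᵢ B(ζⁱ)` with `η, ζⁱ ∈ E`. -/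
def Sform (E : Set (V3 → V3)) : Set (V3 → V3) :=
  {η₁ | ∃ (p : ℕ) (η : V3 → V3) (ζ : Fin p → V3 → V3),
    η ∈ E ∧ (∀ i, ζ i ∈ E) ∧ η₁ = η - ∑ i, Bop (ζ i)}

/-- `F(E)`: the largest vector space all of whose elements can be written
`η − Σᵢ B(ζⁱ)` with `η, ζⁱ ∈ E`. -/
def Fop (E : Set (V3 → V3)) : Set (V3 → V3) :=
  {x | ∃ F : Submodule ℝ (V3 → V3), (F : Set (V3 → V3)) ⊆ Sform E ∧ x ∈ F}

/-- The spaces `E₀(K) = E(K)`, `E_j(K) = F(E_{j−1}(K))`. -/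
def Ej (K : Set (Fin 3 → ℤ)) : ℕ → Set (V3 → V3)
  | 0 => EK K
  | j + 1 => Fop (Ej K j)

/-- `E_∞(K) = ⋃_{j≥1} E_j(K)`. -/
def Einf (K : Set (Fin 3 → ℤ)) : Set (V3 → V3) := ⋃ j : ℕ, Ej K (j + 1)

/-- Two integer vectors are non-parallel if neither is a real multiple of the other. -/
def NonParallel (m n : Fin 3 → ℤ) : Prop :=
  (¬ ∃ c : ℝ, toR m = c • toR n) ∧ (¬ ∃ c : ℝ, toR n = c • toR m)

namespace Statement11Aux

/-! ### Linear algebra helpers for `dot3` -/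

/-- `dot3 v ·` as a continuous linear map. -/
def dotCLM (v : V3) : V3 →L[ℝ] ℝ := ∑ i, v i • ContinuousLinearMap.proj i

@[simp] lemma dotCLM_apply (v x : V3) : dotCLM v x = dot3 v x := by
  simp [dotCLM, dot3]

lemma dot3_comm (a b : V3) : dot3 a b = dot3 b a := by
  simp [dot3, mul_comm]

lemma dot3_add_left (a b c : V3) : dot3 (a + b) c = dot3 a c + dot3 b c := by
  simp [dot3, add_mul, Finset.sum_add_distrib]

lemma dot3_sub_left (a b c : V3) : dot3 (a - b) c = dot3 a c - dot3 b c := by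
  simp [dot3, sub_mul, Finset.sum_sub_distrib]

lemma dot3_neg_left (a b : V3) : dot3 (-a) b = -dot3 a b := by
  simp [dot3]

lemma dot3_neg_right (a b : V3) : dot3 a (-b) = -dot3 a b := by
  simp [dot3]

lemma dot3_add_right (a b c : V3) : dot3 a (b + c) = dot3 a b + dot3 a c := by
  simp [dot3, mul_add, Finset.sum_add_distrib]

lemma dot3_smul_left (t : ℝ) (a b : V3) : dot3 (t • a) b = t * dot3 a b := by
  simp [dot3, Finset.mul_sum, mul_assoc]

lemma dot3_smul_right (t : ℝ) (a b : V3) : dot3 a (t • b) = t * dot3 a b := by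
  simp [dot3, Finset.mul_sum, mul_left_comm]

@[simp] lemma dot3_zero_left (b : V3) : dot3 0 b = 0 := by simp [dot3]

lemma dot3_single (v : V3) (i : Fin 3) : dot3 v (Pi.single i 1) = v i := by
  simp [dot3, Pi.single_apply]

lemma dot3_self_pos {v : V3} (hv : v ≠ 0) : 0 < dot3 v v := by
  obtain ⟨i, hi⟩ := Function.ne_iff.mp hv
  have hi' : (0 : ℝ) < v i * v i := mul_self_pos.mpr hi
  have : (0 : ℝ) < ∑ j, v j * v j :=
    Finset.sum_pos' (fun j _ => mul_self_nonneg _) ⟨i, Finset.mem_univ i, hi'⟩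
  simpa [dot3] using this

lemma toR_add (m n : Fin 3 → ℤ) : toR (m + n) = toR m + toR n := by
  funext i; simp [toR]

lemma toR_sub (m n : Fin 3 → ℤ) : toR (m - n) = toR m - toR n := by
  funext i; simp [toR]

lemma toR_neg (m : Fin 3 → ℤ) : toR (-m) = -toR m := by
  funext i; simp [toR]

@[simp] lemma toR_zero : toR 0 = 0 := by funext i; simp [toR]

/-! ### `proj3` helpers -/

lemma dot3_proj3 (ℓ v : V3) : dot3 (proj3 ℓ v) ℓ = 0 := by
  by_cases hℓ : ℓ = 0
  · simp [proj3, hℓ]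
  · have h := (dot3_self_pos hℓ).ne'
    simp [proj3, hℓ, dot3_sub_left, dot3_smul_left, div_mul_cancel₀, h]

lemma sub_proj3 (ℓ v : V3) (h : ℓ = 0 → v = 0) :
    v - proj3 ℓ v = (if ℓ = 0 then 0 else dot3 v ℓ / dot3 ℓ ℓ) • ℓ := by
  by_cases hℓ : ℓ = 0
  · simp [proj3, hℓ, h hℓ]
  · simp [proj3, hℓ, sub_sub_cancel]

lemma proj3_neg_left (ℓ v : V3) : proj3 (-ℓ) v = proj3 ℓ v := by
  by_cases hℓ : ℓ = 0
  · simp [hℓ]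
  · have h1 : (-ℓ : V3) ≠ 0 := neg_ne_zero.mpr hℓ
    simp [proj3, hℓ, h1, dot3_neg_left, dot3_neg_right, neg_div, neg_neg, smul_neg, neg_smul]

lemma proj3_neg_right (ℓ v : V3) : proj3 ℓ (-v) = -proj3 ℓ v := by
  by_cases hℓ : ℓ = 0
  · simp [proj3, hℓ]
  · rw [proj3, proj3, if_neg hℓ, if_neg hℓ, dot3_neg_left, neg_div, neg_smul]
    abel

/-! ### Calculus helpers -/

lemma hasFDerivAt_dot (v x : V3) : HasFDerivAt (fun y => dot3 v y) (dotCLM v) x := by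
  have h : (fun y => dot3 v y) = ⇑(dotCLM v) := funext fun y => (dotCLM_apply v y).symm
  rw [h]; exact (dotCLM v).hasFDerivAt

lemma contDiff_dot (v : V3) : ContDiff ℝ (⊤ : ℕ∞) (fun y : V3 => dot3 v y) := by
  have h : (fun y => dot3 v y) = ⇑(dotCLM v) := funext fun y => (dotCLM_apply v y).symm
  rw [h]; exact (dotCLM v).contDiff

lemma continuous_dot (v : V3) : Continuous (fun y : V3 => dot3 v y) :=
  (contDiff_dot v).continuous

lemma hasFDerivAt_cosF (v c x : V3) :
    HasFDerivAt (fun y => Real.cos (dot3 v y) • c)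
      (((-Real.sin (dot3 v x)) • dotCLM v).smulRight c) x :=
  ((hasFDerivAt_dot v x).cos).smul_const c

lemma hasFDerivAt_sinF (v c x : V3) :
    HasFDerivAt (fun y => Real.sin (dot3 v y) • c)
      (((Real.cos (dot3 v x)) • dotCLM v).smulRight c) x :=
  ((hasFDerivAt_dot v x).sin).smul_const c

lemma contDiff_cosF (v c : V3) :
    ContDiff ℝ (⊤ : ℕ∞) (fun y : V3 => Real.cos (dot3 v y) • c) :=
  (Real.contDiff_cos.comp (contDiff_dot v)).smul contDiff_const

lemma contDiff_sinF (v c : V3) :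
    ContDiff ℝ (⊤ : ℕ∞) (fun y : V3 => Real.sin (dot3 v y) • c) :=
  (Real.contDiff_sin.comp (contDiff_dot v)).smul contDiff_const

/-! ### Periodicity -/

lemma dot3_toR_int (ℓ k : Fin 3 → ℤ) :
    dot3 (toR ℓ) (toR k) = ((∑ i, ℓ i * k i : ℤ) : ℝ) := by
  simp only [dot3, toR]; push_cast; ring

lemma dot3_per (ℓ k : Fin 3 → ℤ) (x : V3) :
    dot3 (toR ℓ) (x + (2 * Real.pi) • toR k)
      = dot3 (toR ℓ) x + ((∑ i, ℓ i * k i : ℤ) : ℝ) * (2 * Real.pi) := by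
  rw [dot3_add_right, dot3_smul_right, dot3_toR_int]; ring

lemma per_cos (ℓ k : Fin 3 → ℤ) (x : V3) :
    Real.cos (dot3 (toR ℓ) (x + (2 * Real.pi) • toR k)) = Real.cos (dot3 (toR ℓ) x) := by
  rw [dot3_per, Real.cos_add_int_mul_two_pi]

lemma per_sin (ℓ k : Fin 3 → ℤ) (x : V3) :
    Real.sin (dot3 (toR ℓ) (x + (2 * Real.pi) • toR k)) = Real.sin (dot3 (toR ℓ) x) := by
  rw [dot3_per, Real.sin_add_int_mul_two_pi]

/-! ### Integrals -/

lemma isCompact_box3 : IsCompact Box3 := isCompact_univ_pi fun _ => isCompact_Icc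

lemma measurableSet_box3 : MeasurableSet Box3 :=
  MeasurableSet.univ_pi fun _ => measurableSet_Icc

lemma integral_Icc_exp (k : ℤ) (hk : k ≠ 0) :
    (∫ t in Icc (0:ℝ) (2 * Real.pi), Complex.exp ((k : ℂ) * (t : ℂ) * Complex.I)) = 0 := by
  have hc : (k : ℂ) * Complex.I ≠ 0 :=
    mul_ne_zero (Int.cast_ne_zero.mpr hk) Complex.I_ne_zero
  have h2π : (0:ℝ) ≤ 2 * Real.pi := by positivity
  rw [MeasureTheory.integral_Icc_eq_integral_Ioc,
      ← intervalIntegral.integral_of_le h2π]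
  have hrw : ∀ t : ℝ, (k:ℂ) * (t:ℂ) * Complex.I = ((k:ℂ) * Complex.I) * (t:ℂ) :=
    fun t => by ring
  simp_rw [hrw]
  rw [integral_exp_mul_complex hc]
  have h1 : (k:ℂ) * Complex.I * ((2 * Real.pi : ℝ) : ℂ)
      = (k : ℂ) * (2 * (Real.pi : ℂ) * Complex.I) := by push_cast; ring
  rw [h1, Complex.exp_int_mul_two_pi_mul_I]
  norm_num

lemma integral_box_cos (ℓ : Fin 3 → ℤ) (hℓ : ℓ ≠ 0) :
    (∫ x in Box3, Real.cos (dot3 (toR ℓ) x)) = 0 := by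
  have hcont : Continuous fun x : V3 => Complex.exp (((dot3 (toR ℓ) x : ℝ) : ℂ) * Complex.I) :=
    Complex.continuous_exp.comp
      ((Complex.continuous_ofReal.comp (continuous_dot (toR ℓ))).mul continuous_const)
  have hint : MeasureTheory.IntegrableOn
      (fun x : V3 => Complex.exp (((dot3 (toR ℓ) x : ℝ) : ℂ) * Complex.I)) Box3 :=
    hcont.continuousOn.integrableOn_compact isCompact_box3
  have hprod : ∀ x : V3, Complex.exp (((dot3 (toR ℓ) x : ℝ) : ℂ) * Complex.I)
      = ∏ i, Complex.exp ((ℓ i : ℂ) * ((x i : ℝ) : ℂ) * Complex.I) := by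
    intro x
    rw [← Complex.exp_sum]
    congr 1
    simp only [dot3, toR]
    push_cast
    rw [Finset.sum_mul]
  have key : (∫ x in Box3, Complex.exp (((dot3 (toR ℓ) x : ℝ) : ℂ) * Complex.I)) = 0 := by
    simp_rw [hprod]
    rw [← MeasureTheory.integral_indicator measurableSet_box3]
    have hind : ∀ x : V3,
        Box3.indicator (fun x : V3 => ∏ i, Complex.exp ((ℓ i : ℂ) * ((x i : ℝ) : ℂ) * Complex.I)) x
        = ∏ i, (Icc (0:ℝ) (2 * Real.pi)).indicator
            (fun t : ℝ => Complex.exp ((ℓ i : ℂ) * (t : ℂ) * Complex.I)) (x i) := by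
      intro x
      by_cases hx : x ∈ Box3
      · rw [Set.indicator_of_mem hx]
        have hxi : ∀ i, x i ∈ Icc (0:ℝ) (2 * Real.pi) := fun i => hx i (Set.mem_univ i)
        exact Finset.prod_congr rfl fun i _ =>
          (Set.indicator_of_mem (hxi i)
            (fun t : ℝ => Complex.exp ((ℓ i : ℂ) * (t : ℂ) * Complex.I))).symm
      · rw [Set.indicator_of_notMem hx]
        obtain ⟨j, hj⟩ : ∃ j, x j ∉ Icc (0:ℝ) (2 * Real.pi) := by
          by_contra h
          push_neg at h
          exact hx fun i _ => h i
        exact (Finset.prod_eq_zero (Finset.mem_univ j) (Set.indicator_of_notMem hj _)).symm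
    simp_rw [hind]
    rw [MeasureTheory.integral_fintype_prod_volume_eq_prod (ι := Fin 3)
      (fun i => (Icc (0:ℝ) (2 * Real.pi)).indicator
        (fun t : ℝ => Complex.exp ((ℓ i : ℂ) * (t : ℂ) * Complex.I)))]
    obtain ⟨j, hj⟩ := Function.ne_iff.mp hℓ
    refine Finset.prod_eq_zero (Finset.mem_univ j) ?_
    rw [MeasureTheory.integral_indicator measurableSet_Icc]
    exact integral_Icc_exp (ℓ j) (by simpa using hj)
  have hre : ∀ x : V3, Real.cos (dot3 (toR ℓ) x)
      = (Complex.exp (((dot3 (toR ℓ) x : ℝ) : ℂ) * Complex.I)).re :=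
    fun x => (Complex.exp_ofReal_mul_I_re _).symm
  simp_rw [hre]
  have := integral_re (μ := MeasureTheory.volume.restrict Box3) hint
  simp only [RCLike.re_to_complex] at this
  rw [this, key, Complex.zero_re]

lemma integrableOn_cosF (v c : V3) :
    MeasureTheory.IntegrableOn (fun x : V3 => Real.cos (dot3 v x) • c) Box3 :=
  ((Real.continuous_cos.comp (continuous_dot v)).smul continuous_const).continuousOn.integrableOn_compact
    isCompact_box3

lemma integral_box_cos_smul (ℓ : Fin 3 → ℤ) (hℓ : ℓ ≠ 0) (c : V3) :
    (∫ x in Box3, Real.cos (dot3 (toR ℓ) x) • c) = 0 := by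
  rw [integral_smul_const, integral_box_cos ℓ hℓ, zero_smul]

end Statement11Aux
namespace Statement11Aux

lemma convTerm_trig (m n : Fin 3 → ℤ) (a b : V3)
    (ha : dot3 a (toR m) = 0) (hb : dot3 b (toR n) = 0) (x : V3) :
    convTerm (fun y => Real.cos (dot3 (toR m) y) • a + Real.sin (dot3 (toR n) y) • b) x
      = (2⁻¹ * Real.cos (dot3 (toR (m + n)) x)) • (dot3 b (toR m) • a + dot3 a (toR n) • b)
        + (2⁻¹ * Real.cos (dot3 (toR (m - n)) x)) • (dot3 a (toR n) • b - dot3 b (toR m) • a) := by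
  have hD : fderiv ℝ (fun y => Real.cos (dot3 (toR m) y) • a + Real.sin (dot3 (toR n) y) • b) x
      = (((-Real.sin (dot3 (toR m) x)) • dotCLM (toR m)).smulRight a
        + ((Real.cos (dot3 (toR n) x)) • dotCLM (toR n)).smulRight b) :=
    ((hasFDerivAt_cosF (toR m) a x).add (hasFDerivAt_sinF (toR n) b x)).fderiv
  unfold convTerm
  rw [hD]
  simp only [ContinuousLinearMap.add_apply, ContinuousLinearMap.smulRight_apply,
    ContinuousLinearMap.smul_apply, dotCLM_apply, smul_eq_mul]
  rw [dot3_add_right, dot3_add_right, dot3_smul_right, dot3_smul_right, dot3_smul_right,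
    dot3_smul_right, dot3_comm (toR m) a, dot3_comm (toR n) b, ha, hb,
    toR_add, toR_sub, dot3_add_left, dot3_sub_left, Real.cos_add, Real.cos_sub]
  funext i
  simp only [Pi.add_apply, Pi.sub_apply, Pi.smul_apply, smul_eq_mul]
  rw [dot3_comm (toR m) b, dot3_comm (toR n) a]
  ring

lemma leray_single (m n : Fin 3 → ℤ) (a b : V3)
    (ha : dot3 a (toR m) = 0) (hb : dot3 b (toR n) = 0) :
    IsLeray (fun x => Real.cos (dot3 (toR m) x) • a + Real.sin (dot3 (toR n) x) • b)
      (fun x => Real.cos (dot3 (toR (m + n)) x) •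
          ((2⁻¹ : ℝ) • proj3 (toR (m + n)) (dot3 b (toR m) • a + dot3 a (toR n) • b)) +
        Real.cos (dot3 (toR (m - n)) x) •
          ((2⁻¹ : ℝ) • proj3 (toR (m - n)) (dot3 a (toR n) • b - dot3 b (toR m) • a))) := by
  have hcP0 : toR (m + n) = 0 → (dot3 b (toR m) • a + dot3 a (toR n) • b : V3) = 0 := by
    intro h
    have h' : toR m + toR n = 0 := (toR_add m n).symm.trans h
    have hn' : toR n = -toR m := eq_neg_of_add_eq_zero_right h'
    have hm' : toR m = -toR n := eq_neg_of_add_eq_zero_left h'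
    rw [show dot3 b (toR m) = 0 by rw [hm', dot3_neg_right, hb, neg_zero],
      show dot3 a (toR n) = 0 by rw [hn', dot3_neg_right, ha, neg_zero]]
    simp
  have hcM0 : toR (m - n) = 0 → (dot3 a (toR n) • b - dot3 b (toR m) • a : V3) = 0 := by
    intro h
    have h' : toR m - toR n = 0 := (toR_sub m n).symm.trans h
    have hm' : toR m = toR n := sub_eq_zero.mp h'
    rw [show dot3 a (toR n) = 0 by rw [← hm']; exact ha,
      show dot3 b (toR m) = 0 by rw [hm']; exact hb]
    simp
  constructor
  · refine ⟨?_, ?_, ?_, ?_⟩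
    · exact (contDiff_cosF _ _).add (contDiff_cosF _ _)
    · intro x k
      simp only [per_cos]
    · intro x
      have hD : fderiv ℝ (fun x => Real.cos (dot3 (toR (m + n)) x) •
            ((2⁻¹ : ℝ) • proj3 (toR (m + n)) (dot3 b (toR m) • a + dot3 a (toR n) • b)) +
          Real.cos (dot3 (toR (m - n)) x) •
            ((2⁻¹ : ℝ) • proj3 (toR (m - n)) (dot3 a (toR n) • b - dot3 b (toR m) • a))) x
          = (((-Real.sin (dot3 (toR (m + n)) x)) • dotCLM (toR (m + n))).smulRight
              ((2⁻¹ : ℝ) • proj3 (toR (m + n)) (dot3 b (toR m) • a + dot3 a (toR n) • b))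
            + ((-Real.sin (dot3 (toR (m - n)) x)) • dotCLM (toR (m - n))).smulRight
              ((2⁻¹ : ℝ) • proj3 (toR (m - n)) (dot3 a (toR n) • b - dot3 b (toR m) • a))) :=
        ((hasFDerivAt_cosF _ _ x).add (hasFDerivAt_cosF _ _ x)).fderiv
      rw [hD]
      simp only [ContinuousLinearMap.add_apply, ContinuousLinearMap.smulRight_apply,
        ContinuousLinearMap.smul_apply, dotCLM_apply, dot3_single, Pi.add_apply,
        Pi.smul_apply, smul_eq_mul]
      rw [Finset.sum_add_distrib]
      have key : ∀ (s : ℝ) (v C : V3), dot3 C v = 0 →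
          (∑ i, s * v i * (2⁻¹ * C i)) = 0 := by
        intro s v C h
        have : (∑ i, s * v i * (2⁻¹ * C i)) = s * 2⁻¹ * dot3 C v := by
          rw [dot3, Finset.mul_sum]
          exact Finset.sum_congr rfl fun i _ => by ring
        rw [this, h, mul_zero]
      rw [key _ _ _ (dot3_proj3 _ _), key _ _ _ (dot3_proj3 _ _), add_zero]
    · show (∫ x in Box3, _) = 0
      have i1 : (∫ x in Box3, Real.cos (dot3 (toR (m + n)) x) •
          ((2⁻¹ : ℝ) • proj3 (toR (m + n)) (dot3 b (toR m) • a + dot3 a (toR n) • b))) = 0 := by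
        by_cases h : toR (m + n) = 0
        · simp [proj3, h]
        · exact integral_box_cos_smul _ (fun hc => h (by rw [hc, toR_zero])) _
      have i2 : (∫ x in Box3, Real.cos (dot3 (toR (m - n)) x) •
          ((2⁻¹ : ℝ) • proj3 (toR (m - n)) (dot3 a (toR n) • b - dot3 b (toR m) • a))) = 0 := by
        by_cases h : toR (m - n) = 0
        · simp [proj3, h]
        · exact integral_box_cos_smul _ (fun hc => h (by rw [hc, toR_zero])) _
      rw [MeasureTheory.integral_add (integrableOn_cosF _ _) (integrableOn_cosF _ _), i1, i2,
        add_zero]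
  · set α : ℝ := if toR (m + n) = 0 then 0
      else dot3 (dot3 b (toR m) • a + dot3 a (toR n) • b) (toR (m + n)) /
        dot3 (toR (m + n)) (toR (m + n)) with hα
    set β : ℝ := if toR (m - n) = 0 then 0
      else dot3 (dot3 a (toR n) • b - dot3 b (toR m) • a) (toR (m - n)) /
        dot3 (toR (m - n)) (toR (m - n)) with hβ
    refine ⟨fun x => 2⁻¹ * α * Real.sin (dot3 (toR (m + n)) x)
        + 2⁻¹ * β * Real.sin (dot3 (toR (m - n)) x), ?_, ?_, ?_⟩
    · exact (contDiff_const.mul (Real.contDiff_sin.comp (contDiff_dot _))).add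
        (contDiff_const.mul (Real.contDiff_sin.comp (contDiff_dot _)))
    · intro x k
      simp only [per_sin]
    · intro x
      have e1 : (dot3 b (toR m) • a + dot3 a (toR n) • b : V3)
          - proj3 (toR (m + n)) (dot3 b (toR m) • a + dot3 a (toR n) • b)
          = α • toR (m + n) := by
        rw [hα]; exact sub_proj3 _ _ hcP0
      have e2 : (dot3 a (toR n) • b - dot3 b (toR m) • a : V3)
          - proj3 (toR (m - n)) (dot3 a (toR n) • b - dot3 b (toR m) • a)
          = β • toR (m - n) := by
        rw [hβ]; exact sub_proj3 _ _ hcM0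
      have e1' : ∀ i, proj3 (toR (m + n)) (dot3 b (toR m) • a + dot3 a (toR n) • b) i
          = (dot3 b (toR m) • a + dot3 a (toR n) • b : V3) i - α * toR (m + n) i := by
        intro i
        have := congrFun e1 i
        simp only [Pi.sub_apply, Pi.add_apply, Pi.smul_apply, smul_eq_mul] at this ⊢
        linarith
      have e2' : ∀ i, proj3 (toR (m - n)) (dot3 a (toR n) • b - dot3 b (toR m) • a) i
          = (dot3 a (toR n) • b - dot3 b (toR m) • a : V3) i - β * toR (m - n) i := by
        intro i
        have := congrFun e2 i
        simp only [Pi.sub_apply, Pi.add_apply, Pi.smul_apply, smul_eq_mul] at this ⊢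
        linarith
      have hgradD : fderiv ℝ (fun x => 2⁻¹ * α * Real.sin (dot3 (toR (m + n)) x)
            + 2⁻¹ * β * Real.sin (dot3 (toR (m - n)) x)) x
          = ((2⁻¹ * α) • (Real.cos (dot3 (toR (m + n)) x) • dotCLM (toR (m + n)))
            + (2⁻¹ * β) • (Real.cos (dot3 (toR (m - n)) x) • dotCLM (toR (m - n)))) :=
        ((((hasFDerivAt_dot (toR (m + n)) x).sin).const_mul (2⁻¹ * α)).add
          (((hasFDerivAt_dot (toR (m - n)) x).sin).const_mul (2⁻¹ * β))).fderiv
      have hgrad : grad3 (fun x => 2⁻¹ * α * Real.sin (dot3 (toR (m + n)) x)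
            + 2⁻¹ * β * Real.sin (dot3 (toR (m - n)) x)) x
          = fun i => 2⁻¹ * α * Real.cos (dot3 (toR (m + n)) x) * toR (m + n) i
            + 2⁻¹ * β * Real.cos (dot3 (toR (m - n)) x) * toR (m - n) i := by
        funext i
        show fderiv ℝ _ x (Pi.single i 1) = _
        rw [hgradD]
        simp only [ContinuousLinearMap.add_apply, ContinuousLinearMap.smul_apply,
          dotCLM_apply, dot3_single, smul_eq_mul]
        ring
      rw [convTerm_trig m n a b ha hb x, hgrad]
      funext i
      simp only [Pi.add_apply, Pi.sub_apply, Pi.smul_apply, smul_eq_mul]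
      rw [e1' i, e2' i]
      simp only [Pi.add_apply, Pi.sub_apply, Pi.smul_apply, smul_eq_mul]
      ring

end Statement11Aux
open Statement11Aux in
/-- `cos⟨m+n,·⟩ P_{m+n}(⟨a,n⟩b + ⟨b,m⟩a)
= B(a cos⟨m,·⟩ + b sin⟨n,·⟩) + B(b cos⟨n,·⟩ + a sin⟨m,·⟩)`. -/
theorem cos_add_eq_sum_B (m n : Fin 3 → ℤ) (hm : m ≠ 0) (hn : n ≠ 0) (a b : V3)
    (ha : dot3 a (toR m) = 0) (hb : dot3 b (toR n) = 0) :
    ∃ w₁ w₂ : V3 → V3,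
      IsLeray (fun x => Real.cos (dot3 (toR m) x) • a + Real.sin (dot3 (toR n) x) • b) w₁ ∧
      IsLeray (fun x => Real.cos (dot3 (toR n) x) • b + Real.sin (dot3 (toR m) x) • a) w₂ ∧
      ∀ x, w₁ x + w₂ x =
        Real.cos (dot3 (toR (m + n)) x) •
          proj3 (toR (m + n)) (dot3 a (toR n) • b + dot3 b (toR m) • a) := by
  refine ⟨_, _, leray_single m n a b ha hb, leray_single n m b a hb ha, ?_⟩
  intro x
  have hnm : toR (n + m) = toR (m + n) := by rw [add_comm]
  have hd : toR (n - m) = -toR (m - n) := by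
    rw [show n - m = -(m - n) from (neg_sub m n).symm, toR_neg]
  simp only [hnm, hd, dot3_neg_left, Real.cos_neg, proj3_neg_left,
    show (dot3 b (toR m) • a - dot3 a (toR n) • b : V3)
      = -(dot3 a (toR n) • b - dot3 b (toR m) • a) from (neg_sub _ _).symm,
    proj3_neg_right,
    show (dot3 b (toR m) • a + dot3 a (toR n) • b : V3)
      = dot3 a (toR n) • b + dot3 b (toR m) • a from add_comm _ _]
  module
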